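/- Fix m ∈ ℕ and let D(0:m,0:m), M(0:m,0:m) be the (m+1)×(m+1) principal finite sections of the pencil (D, M). If λ ∈ ℝ and v ∈ ℝ^{m+1}, v ≠ 0, satisfy D(0:m,0:m)·v = λ·M(0:m,0:m)·v, then 0 < λ < 2[(m+1)(m+2)]². -/

import Mathlib

/-!
Both Rayleigh quotients are controlled by the symmetric Gershgorin bound
`|vᵀAv - ∑ Aᵢᵢ vᵢ²| ≤ ∑ (∑_{j ≠ i} |Aᵢⱼ|) vᵢ²`. For the diagonal `D` it gives
`0 < vᵀDv ≤ (m+1)(m+2) ‖v‖²`. Row `n` of `M` has diagonal entry `dₙ` and off-diagonal entries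
`eₙ = √ρₙ` (`ρ = massOffDiagSq`) and `eₙ₋₂ ≤ 1/4`; bounding `eₙ ≤ 1/8 + 2ρₙ` turns the row
margin into a rational function exceeding `1/(2(n+1)(n+2))`, so `vᵀMv > ‖v‖² / (2(m+1)(m+2))`.
Then `λ = vᵀDv / vᵀMv`.
-/

open Finset Matrix

/-- The diagonal stiffness matrix `D` with `D(n,n) = (n+1)(n+2)`. -/
noncomputable def Dmat (i j : ℕ) : ℝ :=
  if i = j then ((i : ℝ) + 1) * ((i : ℝ) + 2) else 0

/-- The symmetric pentadiagonal mass matrix `M` with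
`M(n,n) = 2(n+1)(n+2)/((2n+1)(2n+5))` and
`M(n,n+2) = M(n+2,n) = -√((n+1)(n+2)(n+3)(n+4)/((2n+3)(2n+5)²(2n+7)))`. -/
noncomputable def Mmat (i j : ℕ) : ℝ :=
  if i = j then 2 * ((i : ℝ) + 1) * ((i : ℝ) + 2) / ((2 * (i : ℝ) + 1) * (2 * (i : ℝ) + 5))
  else if i + 2 = j then
    -Real.sqrt (((i : ℝ) + 1) * ((i : ℝ) + 2) * ((i : ℝ) + 3) * ((i : ℝ) + 4) /
      ((2 * (i : ℝ) + 3) * (2 * (i : ℝ) + 5) ^ 2 * (2 * (i : ℝ) + 7)))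
  else if j + 2 = i then
    -Real.sqrt (((j : ℝ) + 1) * ((j : ℝ) + 2) * ((j : ℝ) + 3) * ((j : ℝ) + 4) /
      ((2 * (j : ℝ) + 3) * (2 * (j : ℝ) + 5) ^ 2 * (2 * (j : ℝ) + 7)))
  else 0

/-- The `(m+1) × (m+1)` principal finite section `D(0:m,0:m)`. -/
noncomputable def Dsec (m : ℕ) : Matrix (Fin (m + 1)) (Fin (m + 1)) ℝ :=
  Matrix.of fun i j => Dmat (i : ℕ) (j : ℕ)

/-- The `(m+1) × (m+1)` principal finite section `M(0:m,0:m)`. -/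
noncomputable def Msec (m : ℕ) : Matrix (Fin (m + 1)) (Fin (m + 1)) ℝ :=
  Matrix.of fun i j => Mmat (i : ℕ) (j : ℕ)

namespace Matrix.IsSymm

variable {n : Type*} [Fintype n] [DecidableEq n] {A : Matrix n n ℝ}

theorem abs_dotProduct_mulVec_sub_diag_le (hA : A.IsSymm) (v : n → ℝ) :
    |v ⬝ᵥ A *ᵥ v - ∑ i, A i i * v i ^ 2| ≤ ∑ i, (∑ j ∈ univ.erase i, |A i j|) * v i ^ 2 := by
  have hoff : v ⬝ᵥ A *ᵥ v - ∑ i, A i i * v i ^ 2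
      = ∑ i, ∑ j ∈ univ.erase i, v i * (A i j * v j) := by
    simp only [dotProduct, mulVec, mul_sum, ← sum_sub_distrib]
    refine sum_congr rfl fun i _ => ?_
    rw [← add_sum_erase _ _ (mem_univ i)]
    ring
  have hswap : ∑ i, ∑ j ∈ univ.erase i, |A i j| * v j ^ 2
      = ∑ i, ∑ j ∈ univ.erase i, |A i j| * v i ^ 2 := by
    simp only [sum_erase_eq_sub (mem_univ _), sum_sub_distrib]
    rw [sum_comm]
    simp only [hA.apply]
  calc |v ⬝ᵥ A *ᵥ v - ∑ i, A i i * v i ^ 2|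
      ≤ ∑ i, ∑ j ∈ univ.erase i, |v i * (A i j * v j)| := by
        rw [hoff]
        exact (abs_sum_le_sum_abs _ _).trans (sum_le_sum fun i _ => abs_sum_le_sum_abs _ _)
    _ ≤ ∑ i, ∑ j ∈ univ.erase i, |A i j| * ((v i ^ 2 + v j ^ 2) / 2) := by
        gcongr with i _ j _
        rw [abs_mul, abs_mul, mul_left_comm]
        gcongr
        nlinarith [sq_nonneg (|v i| - |v j|), sq_abs (v i), sq_abs (v j)]
    _ = ∑ i, (∑ j ∈ univ.erase i, |A i j|) * v i ^ 2 := by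
        simp only [mul_div_assoc', mul_add, add_div, sum_add_distrib, ← sum_div,
          hswap, sum_mul]
        ring

theorem mul_dotProduct_self_lt_dotProduct_mulVec (hA : A.IsSymm) {c : ℝ}
    (hc : ∀ i, c < A i i - ∑ j ∈ univ.erase i, |A i j|) {v : n → ℝ} (hv : v ≠ 0) :
    c * (v ⬝ᵥ v) < v ⬝ᵥ A *ᵥ v := by
  obtain ⟨k, hk⟩ := Function.ne_iff.mp hv
  have hlt : ∑ i, c * v i ^ 2 < ∑ i, (A i i - ∑ j ∈ univ.erase i, |A i j|) * v i ^ 2 :=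
    sum_lt_sum (fun i _ => by gcongr; exact (hc i).le)
      ⟨k, mem_univ k, mul_lt_mul_of_pos_right (hc k) (sq_pos_of_ne_zero hk)⟩
  have := neg_abs_le (v ⬝ᵥ A *ᵥ v - ∑ i, A i i * v i ^ 2)
  have := hA.abs_dotProduct_mulVec_sub_diag_le v
  simp only [sub_mul, sum_sub_distrib] at hlt
  simp only [dotProduct, ← mul_sum, ← sq] at *
  linarith

theorem dotProduct_mulVec_le_mul_dotProduct_self (hA : A.IsSymm) {c : ℝ}
    (hc : ∀ i, A i i + ∑ j ∈ univ.erase i, |A i j| ≤ c) (v : n → ℝ) :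
    v ⬝ᵥ A *ᵥ v ≤ c * (v ⬝ᵥ v) := by
  have hle : ∑ i, (A i i + ∑ j ∈ univ.erase i, |A i j|) * v i ^ 2 ≤ ∑ i, c * v i ^ 2 :=
    sum_le_sum fun i _ => by gcongr; exact hc i
  have := le_abs_self (v ⬝ᵥ A *ᵥ v - ∑ i, A i i * v i ^ 2)
  have := hA.abs_dotProduct_mulVec_sub_diag_le v
  simp only [add_mul, sum_add_distrib] at hle
  simp only [dotProduct, ← mul_sum, ← sq] at *
  linarith

end Matrix.IsSymm

theorem Matrix.sum_erase_abs_diagonal {n : Type*} [Fintype n] [DecidableEq n] (d : n → ℝ)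
    (i : n) : ∑ j ∈ univ.erase i, |diagonal d i j| = 0 :=
  sum_eq_zero fun _ hj => by rw [diagonal_apply_ne _ (ne_of_mem_erase hj).symm, abs_zero]

theorem Matrix.pos_and_lt_div_of_mulVec_eq_smul_mulVec {n : Type*} [Fintype n]
    {D M : Matrix n n ℝ} {v : n → ℝ} {lam a b : ℝ} (heig : D *ᵥ v = lam • M *ᵥ v) (ha : 0 < a)
    (hM : a * (v ⬝ᵥ v) < v ⬝ᵥ M *ᵥ v) (hDpos : 0 < v ⬝ᵥ D *ᵥ v)
    (hD : v ⬝ᵥ D *ᵥ v ≤ b * (v ⬝ᵥ v)) : 0 < lam ∧ lam < b / a := by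
  have hquot : v ⬝ᵥ D *ᵥ v = lam * (v ⬝ᵥ M *ᵥ v) := by
    rw [heig, dotProduct_smul, smul_eq_mul]
  have hS : 0 ≤ v ⬝ᵥ v := dotProduct_self_star_nonneg v
  have hQ : 0 < v ⬝ᵥ M *ᵥ v := (mul_nonneg ha.le hS).trans_lt hM
  have hlam : 0 < lam := (pos_iff_pos_of_mul_pos (hquot ▸ hDpos)).2 hQ
  refine ⟨hlam, (lt_div_iff₀ ha).2 (lt_of_mul_lt_mul_right ?_ hS)⟩
  calc lam * a * (v ⬝ᵥ v) = lam * (a * (v ⬝ᵥ v)) := mul_assoc _ _ _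
    _ < lam * (v ⬝ᵥ M *ᵥ v) := mul_lt_mul_of_pos_left hM hlam
    _ = v ⬝ᵥ D *ᵥ v := hquot.symm
    _ ≤ b * (v ⬝ᵥ v) := hD

theorem Finset.sum_ite_le_of_subsingleton {α : Type*} {s : Finset α} {p : α → Prop}
    [DecidablePred p] {f : α → ℝ} {c : ℝ} (hc : 0 ≤ c) (hf : ∀ a, p a → f a ≤ c)
    (hp : ∀ a b, p a → p b → a = b) :
    ∑ a ∈ s, (if p a then f a else 0) ≤ c := by
  rw [← sum_filter]
  have hcard : #(s.filter p) ≤ 1 :=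
    card_le_one.mpr fun a ha b hb => hp a b (mem_filter.1 ha).2 (mem_filter.1 hb).2
  calc ∑ a ∈ s.filter p, f a ≤ #(s.filter p) • c :=
        sum_le_card_nsmul _ _ _ fun a ha => hf a (mem_filter.1 ha).2
    _ ≤ 1 • c := by gcongr
    _ = c := one_smul _ _

noncomputable def massOffDiagSq (x : ℝ) : ℝ :=
  (x + 1) * (x + 2) * (x + 3) * (x + 4) / ((2 * x + 3) * (2 * x + 5) ^ 2 * (2 * x + 7))

lemma massOffDiagSq_nonneg {x : ℝ} (hx : 0 ≤ x) : 0 ≤ massOffDiagSq x := by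
  unfold massOffDiagSq
  positivity

lemma massOffDiagSq_le_one_div_sixteen {x : ℝ} (hx : 0 ≤ x) : massOffDiagSq x ≤ 1 / 16 := by
  rw [massOffDiagSq, div_le_iff₀ (by positivity)]
  nlinarith [sq_nonneg x, pow_nonneg hx 3]

lemma sqrt_massOffDiagSq_le_one_div_four {x : ℝ} (hx : 0 ≤ x) : √(massOffDiagSq x) ≤ 1 / 4 := by
  rw [Real.sqrt_le_left (by norm_num)]
  linarith [massOffDiagSq_le_one_div_sixteen hx]

lemma one_div_lt_mass_diag_sub_offDiag_bound {x : ℝ} (hx : 0 ≤ x) :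
    1 / (2 * (x + 1) * (x + 2)) < 2 * (x + 1) * (x + 2) / ((2 * x + 1) * (2 * x + 5))
      - (1 / 8 + 2 * massOffDiagSq x) - 1 / 4 := by
  rw [massOffDiagSq, ← sub_pos]
  convert (by positivity : (0 : ℝ) < (64 * x ^ 6 + 448 * x ^ 5 + 856 * x ^ 4 + 304 * x ^ 3
      + 2050 * x ^ 2 + 8158 * x + 7020) / (16 * (2 * x + 1) * (2 * x + 3) * (2 * x + 5) ^ 3
      * (2 * x + 7) * (x + 1) * (x + 2))) using 1
  field_simp
  ring

lemma abs_Mmat_of_ne {i j : ℕ} (h : i ≠ j) :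
    |Mmat i j| = (if i + 2 = j then √(massOffDiagSq i) else 0)
      + (if j + 2 = i then √(massOffDiagSq j) else 0) := by
  unfold Mmat massOffDiagSq
  by_cases h₁ : i + 2 = j
  · simp [h, h₁, show ¬ (j + 2 = i) by omega]
  · by_cases h₂ : j + 2 = i <;> simp [h, h₁, h₂]

lemma Msec_isSymm (m : ℕ) : (Msec m).IsSymm :=
  IsSymm.ext fun i j => by
    unfold Msec Mmat
    by_cases h : i = j
    · subst h; rfl
    · simp only [of_apply, Fin.val_eq_val, h, Ne.symm h, if_false]
      split_ifs <;> first | rfl | omega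

lemma sum_erase_abs_Msec_le (m : ℕ) (i : Fin (m + 1)) :
    ∑ j ∈ univ.erase i, |Msec m i j| ≤ √(massOffDiagSq i) + 1 / 4 := by
  have hrow : ∀ j ∈ univ.erase i, |Msec m i j|
      = (if (i : ℕ) + 2 = j then √(massOffDiagSq i) else 0)
        + (if (j : ℕ) + 2 = i then √(massOffDiagSq j) else 0) := fun j hj =>
    abs_Mmat_of_ne (Fin.val_ne_of_ne (ne_of_mem_erase hj).symm)
  rw [sum_congr rfl hrow, sum_add_distrib]
  gcongr
  · exact sum_ite_le_of_subsingleton (Real.sqrt_nonneg _) (fun _ _ => le_rfl)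
      fun a b ha hb => Fin.ext (ha.symm.trans hb)
  · exact sum_ite_le_of_subsingleton (by norm_num)
      (fun j _ => sqrt_massOffDiagSq_le_one_div_four (Nat.cast_nonneg _))
      fun a b ha hb => Fin.ext (by omega)

lemma Msec_apply_self (m : ℕ) (i : Fin (m + 1)) :
    Msec m i i = 2 * ((i : ℝ) + 1) * ((i : ℝ) + 2) / ((2 * (i : ℝ) + 1) * (2 * (i : ℝ) + 5)) := by
  simp [Msec, Mmat]

lemma one_div_lt_Msec_apply_self_sub_sum_erase_abs (m : ℕ) (i : Fin (m + 1)) :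
    1 / (2 * ((m : ℝ) + 1) * ((m : ℝ) + 2)) < Msec m i i - ∑ j ∈ univ.erase i, |Msec m i j| := by
  have hx : (0 : ℝ) ≤ i := Nat.cast_nonneg _
  have him : (i : ℝ) ≤ m := Nat.cast_le.2 i.is_le
  -- AM-GM; bounding this entry by `1 / 4` instead would already lose the margin at `i = 1`
  have hsqrt : √(massOffDiagSq i) ≤ 1 / 8 + 2 * massOffDiagSq i := by
    nlinarith [sq_nonneg (√(massOffDiagSq i) - 1 / 4),
      Real.sq_sqrt (massOffDiagSq_nonneg hx)]
  calc 1 / (2 * ((m : ℝ) + 1) * ((m : ℝ) + 2)) ≤ 1 / (2 * ((i : ℝ) + 1) * ((i : ℝ) + 2)) := by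
        gcongr
    _ < _ := one_div_lt_mass_diag_sub_offDiag_bound hx
    _ ≤ Msec m i i - ∑ j ∈ univ.erase i, |Msec m i j| := by
        rw [Msec_apply_self]
        linarith [sum_erase_abs_Msec_le m i]

lemma Dsec_eq_diagonal (m : ℕ) :
    Dsec m = diagonal fun i : Fin (m + 1) => ((i : ℝ) + 1) * ((i : ℝ) + 2) := by
  ext i j
  simp [Dsec, Dmat, diagonal_apply, Fin.val_inj]

lemma Dsec_isSymm (m : ℕ) : (Dsec m).IsSymm :=
  Dsec_eq_diagonal m ▸ isSymm_diagonal _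

lemma sum_erase_abs_Dsec (m : ℕ) (i : Fin (m + 1)) : ∑ j ∈ univ.erase i, |Dsec m i j| = 0 :=
  Dsec_eq_diagonal m ▸ sum_erase_abs_diagonal _ i

lemma Dsec_apply_self (m : ℕ) (i : Fin (m + 1)) : Dsec m i i = ((i : ℝ) + 1) * ((i : ℝ) + 2) := by
  simp [Dsec, Dmat]

theorem generalized_eigenvalue_bounds (m : ℕ) (lam : ℝ) (v : Fin (m + 1) → ℝ)
    (hv : v ≠ 0)
    (heig : (Dsec m).mulVec v = lam • (Msec m).mulVec v) :
    0 < lam ∧ lam < 2 * (((m : ℝ) + 1) * ((m : ℝ) + 2)) ^ 2 := by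
  have hM := (Msec_isSymm m).mul_dotProduct_self_lt_dotProduct_mulVec
    (one_div_lt_Msec_apply_self_sub_sum_erase_abs m) hv
  have hDpos := (Dsec_isSymm m).mul_dotProduct_self_lt_dotProduct_mulVec (c := 0)
    (fun i => by rw [sum_erase_abs_Dsec, Dsec_apply_self, sub_zero]; positivity) hv
  have hD := (Dsec_isSymm m).dotProduct_mulVec_le_mul_dotProduct_self
    (c := ((m : ℝ) + 1) * ((m : ℝ) + 2)) (fun i => by
      have him : (i : ℝ) ≤ m := Nat.cast_le.2 i.is_le
      rw [sum_erase_abs_Dsec, Dsec_apply_self, add_zero]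
      gcongr) v
  obtain ⟨hpos, hlt⟩ := pos_and_lt_div_of_mulVec_eq_smul_mulVec heig (by positivity) hM
    (zero_mul (v ⬝ᵥ v) ▸ hDpos) hD
  refine ⟨hpos, hlt.trans_eq ?_⟩
  field_simp
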